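/- Let O be a discrete valuation ring with maximal ideal 𝔪 and finite residue field. Let sp_{2d}(O) ⊆ Mat_{2d}(O) be the symplectic Lie algebra, consisting of all block matrices [[a, b],[c, -a^⊤]] with a, b, c ∈ Mat_d(O), b = b^⊤ and c = c^⊤. For n ≥ 0, let sp_{2d}(O)_n denote the image of sp_{2d}(O) under entrywise reduction Mat_{2d}(O) → Mat_{2d}(O/𝔪^n). Then for every n ≥ 0, ask(sp_{2d}(O)_n) = ask(Mat_{2d}(O/𝔪^n)). -/

import Mathlib

/-!
Double counting the pairs `(x, a)` with `x ᵥ* a = 0` gives `ask N = ∑ₓ 1 / |x ᵥ* N|` for a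
submodule `N` of matrices over a finite ring, so it suffices to show `x ᵥ* sp = x ᵥ* Mat` for
every row vector `x` over `O ⧸ 𝔪 ^ n`. Divisibility is total in this ring, so some entry `yᵢ`
of a vector `y` divides all the others, `y = yᵢ • t`, and then a symmetric matrix supported on
row and column `i` realises any `y ᵥ* A`: thus `y ᵥ* Sym = y ᵥ* Mat`. As `J * Sym ⊆ sp` and `J`
is invertible, `x ᵥ* sp ⊇ (x ᵥ* J) ᵥ* Sym = x ᵥ* Mat`. Finally, `sp_{2d}(O)` reduces onto
`sp_{2d}(O ⧸ 𝔪 ^ n)` because symmetric matrices lift along surjections.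
-/

/-- The average size of the kernel of the elements of a set `N` of `m × n` matrices
over a commutative ring `S`, where matrices act on row vectors by right multiplication. -/
noncomputable def ask {S : Type*} [CommRing S] {m n : Type*} [Fintype m]
    (N : Set (Matrix m n S)) : ℚ :=
  (Nat.card N : ℚ)⁻¹ *
    ∑ᶠ a : N, (Nat.card {x : m → S | Matrix.vecMul x (a : Matrix m n S) = 0} : ℚ)

def reduceMod {R : Type*} [CommRing R] {m n : Type*}
    (N : Set (Matrix m n R)) (c : Ideal R) :
    Set (Matrix m n (R ⧸ c)) :=
  (fun A : Matrix m n R => A.map (Ideal.Quotient.mk c)) '' N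

open Matrix

namespace Matrix

variable {S : Type*} [CommRing S] {m n : Type*} [Fintype m]

def vecMulRight (x : m → S) : Matrix m n S →ₗ[S] n → S where
  toFun A := x ᵥ* A
  map_add' A B := vecMul_add A B x
  map_smul' c A := vecMul_smul x c A

@[simp]
theorem vecMulRight_apply (x : m → S) (A : Matrix m n S) : vecMulRight x A = x ᵥ* A := rfl

end Matrix

theorem LinearMap.inv_card_mul_card_ker {R M P : Type*} [Ring R] [AddCommGroup M] [Module R M]
    [AddCommGroup P] [Module R P] [Finite M] (f : M →ₗ[R] P) :
    (Nat.card M : ℚ)⁻¹ * Nat.card (LinearMap.ker f) = (Nat.card (LinearMap.range f) : ℚ)⁻¹ := by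
  have hM : Nat.card M = Nat.card (LinearMap.ker f) * Nat.card (LinearMap.range f) := by
    rw [Submodule.card_eq_card_quotient_mul_card (LinearMap.ker f),
      Nat.card_congr f.quotKerEquivRange.toEquiv]
  have hker : (Nat.card (LinearMap.ker f) : ℚ) ≠ 0 := Nat.cast_ne_zero.mpr Nat.card_pos.ne'
  rw [hM, Nat.cast_mul, mul_inv, mul_comm, ← mul_assoc, mul_inv_cancel₀ hker, one_mul]

theorem ask_eq_sum_inv_card_map_vecMulRight {S : Type*} [CommRing S] [Fintype S] {m n : Type*}
    [Fintype m] [DecidableEq m] [Finite n] (N : Submodule S (Matrix m n S)) :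
    ask (N : Set (Matrix m n S)) = ∑ x : m → S, (Nat.card (N.map (vecMulRight x)) : ℚ)⁻¹ := by
  classical
  have := Fintype.ofFinite N
  have hcount : ∀ a : (N : Set (Matrix m n S)),
      (Nat.card {x : m → S | x ᵥ* (a : Matrix m n S) = 0} : ℚ) =
        ∑ x : m → S, if x ᵥ* (a : Matrix m n S) = 0 then 1 else 0 := by
    intro a
    rw [Finset.sum_boole]
    simp [Nat.card_eq_fintype_card, Fintype.card_subtype]
  have hker : ∀ x : m → S,
      (∑ a : (N : Set (Matrix m n S)), if x ᵥ* (a : Matrix m n S) = 0 then (1 : ℚ) else 0) =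
        Nat.card (LinearMap.ker ((vecMulRight x).domRestrict N)) := by
    intro x
    rw [Finset.sum_boole]
    simp [Nat.card_eq_fintype_card, Fintype.card_subtype]
  unfold ask
  rw [finsum_eq_sum_of_fintype, Finset.sum_congr rfl fun a _ => hcount a, Finset.sum_comm,
    Finset.mul_sum]
  refine Finset.sum_congr rfl fun x _ => ?_
  rw [hker, ← LinearMap.range_domRestrict]
  exact LinearMap.inv_card_mul_card_ker _

theorem PreValuationRing.exists_forall_dvd {S : Type*} [CommRing S] [PreValuationRing S]
    {ι : Type*} [Fintype ι] [Nonempty ι] (y : ι → S) : ∃ i, ∀ j, y i ∣ y j := by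
  obtain ⟨i, -, hi⟩ := Finset.exists_maximalFor (fun i => Ideal.span {y i}) Finset.univ
    Finset.univ_nonempty
  refine ⟨i, fun j => (ValuationRing.dvd_total (y i) (y j)).elim id fun h => ?_⟩
  exact Ideal.span_singleton_le_span_singleton.mp
    (hi (Finset.mem_univ j) (Ideal.span_singleton_le_span_singleton.mpr h))

instance Ideal.Quotient.preValuationRing {R : Type*} [CommRing R] [PreValuationRing R]
    (I : Ideal R) : PreValuationRing (R ⧸ I) :=
  Function.Surjective.preValuationRing (Ideal.Quotient.mk I : R →ₙ* R ⧸ I)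
    Ideal.Quotient.mk_surjective

namespace Matrix

section vecMul

variable {S ι : Type*} [CommRing S] [Fintype ι]

theorem exists_isSymm_smul_vecMul_eq {c : S} {t u : ι → S} (hc : (c • t) ⬝ᵥ u = c)
    (A : Matrix ι ι S) : ∃ M : Matrix ι ι S, M.IsSymm ∧ (c • t) ᵥ* M = (c • t) ᵥ* A := by
  set s := t ᵥ* A
  refine ⟨vecMulVec u s + vecMulVec s u - (t ⬝ᵥ s) • vecMulVec u u, ?_, ?_⟩
  · simp [IsSymm, transpose_vecMulVec, add_comm]
  · simp only [vecMul_sub, vecMul_add, vecMul_smul, vecMul_vecMulVec, hc, smul_dotProduct,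
      smul_vecMul, s]
    module

theorem exists_isSymm_vecMul_eq [PreValuationRing S] [DecidableEq ι] (y : ι → S)
    (A : Matrix ι ι S) : ∃ M : Matrix ι ι S, M.IsSymm ∧ y ᵥ* M = y ᵥ* A := by
  cases isEmpty_or_nonempty ι
  · exact ⟨0, by simp [IsSymm], Subsingleton.elim _ _⟩
  obtain ⟨i, hi⟩ := PreValuationRing.exists_forall_dvd y
  choose t ht using hi
  have hy : y = y i • t := funext ht
  rw [hy]
  exact exists_isSymm_smul_vecMul_eq (u := Pi.single i 1) (by simp [← hy]) A

end vecMul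

theorem exists_isSymm_map_eq {l R S : Type*} [LinearOrder l] {f : R → S}
    (hf : Function.Surjective f) {b : Matrix l l S} (hb : b.IsSymm) :
    ∃ b' : Matrix l l R, b'.IsSymm ∧ b'.map f = b := by
  choose g hg using hf
  refine ⟨of fun i j => g (b (min i j) (max i j)), IsSymm.ext fun i j => ?_, ?_⟩
  · simp [min_comm, max_comm]
  · ext i j
    rcases le_total i j with h | h
    · simp [h, hg]
    · simp [h, hg, hb.apply]

def symplecticBlocks (l R : Type*) [CommRing R] : Submodule R (Matrix (l ⊕ l) (l ⊕ l) R) where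
  carrier := {A | ∃ a b c : Matrix l l R, bᵀ = b ∧ cᵀ = c ∧ A = fromBlocks a b c (-aᵀ)}
  add_mem' := by
    rintro _ _ ⟨a, b, c, hb, hc, rfl⟩ ⟨a', b', c', hb', hc', rfl⟩
    exact ⟨a + a', b + b', c + c', by rw [transpose_add, hb, hb'], by rw [transpose_add, hc, hc'],
      by rw [fromBlocks_add, transpose_add, neg_add]⟩
  zero_mem' := ⟨0, 0, 0, transpose_zero, transpose_zero, by simp⟩
  smul_mem' := by
    rintro r _ ⟨a, b, c, hb, hc, rfl⟩
    exact ⟨r • a, r • b, r • c, by rw [transpose_smul, hb], by rw [transpose_smul, hc],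
      by rw [fromBlocks_smul, transpose_smul, smul_neg]⟩

variable {l R : Type*} [CommRing R]

theorem coe_symplecticBlocks : (symplecticBlocks l R : Set (Matrix (l ⊕ l) (l ⊕ l) R)) =
    {A | ∃ a b c : Matrix l l R, bᵀ = b ∧ cᵀ = c ∧ A = fromBlocks a b c (-aᵀ)} := rfl

theorem J_mul_mem_symplecticBlocks [Fintype l] [DecidableEq l] {M : Matrix (l ⊕ l) (l ⊕ l) R}
    (hM : M.IsSymm) : J l R * M ∈ symplecticBlocks l R := by
  rw [← fromBlocks_toBlocks M, isSymm_fromBlocks_iff] at hM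
  obtain ⟨hA, hBC, -, hD⟩ := hM
  refine ⟨-M.toBlocks₂₁, -M.toBlocks₂₂, M.toBlocks₁₁, by rw [transpose_neg, hD], hA, ?_⟩
  rw [← fromBlocks_toBlocks M, J, fromBlocks_multiply]
  simp [← hBC]

theorem map_vecMulRight_symplecticBlocks [PreValuationRing R] [Fintype l] [DecidableEq l]
    (x : l ⊕ l → R) :
    (symplecticBlocks l R).map (vecMulRight x) = LinearMap.range (vecMulRight x) := by
  refine le_antisymm LinearMap.map_le_range ?_
  rintro _ ⟨A, rfl⟩
  obtain ⟨M, hM, hxM⟩ := exists_isSymm_vecMul_eq (x ᵥ* J l R) (-(J l R * A))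
  refine ⟨J l R * M, J_mul_mem_symplecticBlocks hM, ?_⟩
  rw [vecMulRight_apply, vecMulRight_apply, ← vecMul_vecMul, hxM, vecMul_vecMul, mul_neg,
    ← Matrix.mul_assoc, J_squared, neg_mul, neg_neg, Matrix.one_mul]

theorem image_map_symplecticBlocks {S : Type*} [CommRing S] [LinearOrder l] {f : R →+* S}
    (hf : Function.Surjective f) :
    (fun A => A.map f) '' (symplecticBlocks l R : Set (Matrix (l ⊕ l) (l ⊕ l) R)) =
      symplecticBlocks l S := by
  have hmap : ∀ a b c : Matrix l l R,
      (fromBlocks a b c (-aᵀ)).map f = fromBlocks (a.map f) (b.map f) (c.map f) (-(a.map f)ᵀ) :=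
    fun a b c => by rw [fromBlocks_map, Matrix.map_neg _ (map_neg f), transpose_map]
  ext A
  constructor
  · rintro ⟨_, ⟨a, b, c, hb, hc, rfl⟩, rfl⟩
    exact ⟨a.map f, b.map f, c.map f, by rw [← transpose_map, hb], by rw [← transpose_map, hc],
      hmap a b c⟩
  · rintro ⟨a, b, c, hb, hc, rfl⟩
    obtain ⟨b', hb', rfl⟩ := exists_isSymm_map_eq hf hb
    obtain ⟨c', hc', rfl⟩ := exists_isSymm_map_eq hf hc
    have ha : (a.map (Function.surjInv hf)).map f = a := by
      ext; simp [Function.surjInv_eq hf]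
    exact ⟨_, ⟨a.map (Function.surjInv hf), b', c', hb', hc', rfl⟩, by dsimp only; rw [hmap, ha]⟩

end Matrix

/-- The ask zeta function of the symplectic Lie algebra `sp_{2d}(O)` coincides with that
of `gl_{2d}(O)`: at every level `n`, `ask(sp_{2d}(O)_n) = ask(Mat_{2d}(O/𝔪^n))`. -/
theorem ask_sp_eq_ask_gl {O : Type*} [CommRing O] [IsDomain O] [IsDiscreteValuationRing O]
    [Finite (IsLocalRing.ResidueField O)]
    (d : ℕ) (n : ℕ) :
    ask (reduceMod
        {A : Matrix (Fin d ⊕ Fin d) (Fin d ⊕ Fin d) O |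
          ∃ a b c : Matrix (Fin d) (Fin d) O,
            b.transpose = b ∧ c.transpose = c ∧
              A = Matrix.fromBlocks a b c (-a.transpose)}
        (IsLocalRing.maximalIdeal O ^ n)) =
      ask (Set.univ :
        Set (Matrix (Fin d ⊕ Fin d) (Fin d ⊕ Fin d)
          (O ⧸ IsLocalRing.maximalIdeal O ^ n))) := by
  have : Finite (O ⧸ IsLocalRing.maximalIdeal O) := ‹Finite (IsLocalRing.ResidueField O)›
  have := Ideal.finite_quotient_pow (IsNoetherian.noetherian (IsLocalRing.maximalIdeal O)) n
  cases nonempty_fintype (O ⧸ IsLocalRing.maximalIdeal O ^ n)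
  rw [← coe_symplecticBlocks, reduceMod, image_map_symplecticBlocks Ideal.Quotient.mk_surjective,
    ← Submodule.top_coe (R := O ⧸ IsLocalRing.maximalIdeal O ^ n),
    ask_eq_sum_inv_card_map_vecMulRight, ask_eq_sum_inv_card_map_vecMulRight]
  simp only [map_vecMulRight_symplecticBlocks, Submodule.map_top]
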